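/- arXiv:2510.25795 — 2 statements merged into one kernel-verified Lean document; each statement's English description precedes it below -/
import Mathlib

section
/- Let Q = y + Γx² with Γ ≠ 0, let f₁ = x + β_m Q^m with β_m ≠ 0 and m ≥ 2, and f₂ = Q + λ f₁. Then the polynomial map f = (f₁, f₂) has total degree 2m, and H = ½(f₁² + f₂²) has total degree 4m, so the associated Hamiltonian system has degree at most 4m − 1. -/
open MvPolynomial

section Aux

variable {σ R : Type*} [CommRing R]

lemma aux_totalDegree_C_mul_le (a : R) (p : MvPolynomial σ R) :
    (C a * p).totalDegree ≤ p.totalDegree :=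
  (totalDegree_mul _ _).trans (by simp)

/-- Differentiation lowers total degree by at least one. -/
lemma aux_totalDegree_pderiv_le (i : σ) (p : MvPolynomial σ R) :
    (pderiv i p).totalDegree ≤ p.totalDegree - 1 := by
  classical
  conv_lhs => rw [p.as_sum]
  rw [map_sum]
  refine (totalDegree_finset_sum _ _).trans (Finset.sup_le ?_)
  intro s hs
  rw [pderiv_monomial]
  by_cases h : s i = 0
  · simp [h]
  · refine (totalDegree_monomial_le _ _).trans ?_
    have h1 : (s - Finsupp.single i 1) + Finsupp.single i 1 = s := by
      ext j
      rcases eq_or_ne j i with rfl | hj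
      · simp [Finsupp.single_apply]
        omega
      · simp [Finsupp.single_apply, Ne.symm hj]
    have hsum : ((s - Finsupp.single i 1).sum fun _ e => e) + 1 = s.sum fun _ e => e := by
      conv_rhs => rw [← h1]
      rw [Finsupp.sum_add_index' (fun _ => rfl) (fun _ _ _ => rfl),
        Finsupp.sum_single_index rfl]
    have h2 := le_totalDegree hs
    have h3 : ((s - Finsupp.single i 1).sum fun _ => id) =
        ((s - Finsupp.single i 1).sum fun _ e => e) := rfl
    omega

/-- If the total degree is less than `n`, the coefficient of `x_i^n` vanishes. -/
lemma aux_coeff_single_eq_zero {p : MvPolynomial σ R} {n : ℕ} (i : σ)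
    (h : p.totalDegree < n) : coeff (Finsupp.single i n) p = 0 := by
  by_contra h'
  have h2 := le_totalDegree (p := p) (mem_support_iff.mpr h')
  rw [Finsupp.sum_single_index rfl] at h2
  omega

/-- Coefficient of `x₀^(2k)` in `(x₁ + Γ x₀²)^k` is `Γ^k`. -/
lemma aux_coeffQ (Γ : R) (k : ℕ) :
    coeff (Finsupp.single (0 : Fin 2) (2 * k))
      ((X 1 + C Γ * X 0 ^ 2 : MvPolynomial (Fin 2) R) ^ k) = Γ ^ k := by
  induction k with
  | zero => simp
  | succ n ih =>
    have hE : (X 1 + C Γ * X 0 ^ 2 : MvPolynomial (Fin 2) R) ^ (n + 1)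
        = (X 1 + C Γ * X 0 ^ 2) ^ n * X 1
          + C Γ * ((X 1 + C Γ * X 0 ^ 2) ^ n * X 0 * X 0) := by ring
    have h1 : coeff (Finsupp.single (0 : Fin 2) (2 * (n + 1)))
        ((X 1 + C Γ * X 0 ^ 2 : MvPolynomial (Fin 2) R) ^ n * X 1) = 0 := by
      rw [coeff_mul_X']
      simp [Finsupp.single_apply]
    have h2 : Finsupp.single (0 : Fin 2) (2 * (n + 1))
        = Finsupp.single 0 (2 * n) + Finsupp.single 0 1 + Finsupp.single 0 1 := by
      rw [show 2 * (n + 1) = 2 * n + 1 + 1 by ring, Finsupp.single_add, Finsupp.single_add]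
    rw [hE, coeff_add, h1, coeff_C_mul, h2, coeff_mul_X, coeff_mul_X, ih]
    ring

end Aux

theorem stmt11 (m : ℕ) (hm : 2 ≤ m) (Γ βm lam : ℝ) (hΓ : Γ ≠ 0) (hβ : βm ≠ 0)
    (Q f₁ f₂ H : MvPolynomial (Fin 2) ℝ)
    (hQ : Q = X 1 + C Γ * X 0 ^ 2)
    (hf₁ : f₁ = X 0 + C βm * Q ^ m)
    (hf₂ : f₂ = Q + C lam * f₁)
    (hH : H = C (1 / 2 : ℝ) * (f₁ ^ 2 + f₂ ^ 2)) :
    max f₁.totalDegree f₂.totalDegree = 2 * m ∧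
    H.totalDegree = 4 * m ∧
    (pderiv 0 H).totalDegree ≤ 4 * m - 1 ∧
    (pderiv 1 H).totalDegree ≤ 4 * m - 1 := by
  -- degree of Q
  have hQdeg : Q.totalDegree ≤ 2 := by
    subst hQ
    refine (totalDegree_add _ _).trans (max_le (by rw [totalDegree_X]; omega) ?_)
    refine (aux_totalDegree_C_mul_le _ _).trans ((totalDegree_pow _ _).trans ?_)
    rw [totalDegree_X]
  have hQpow : ∀ k : ℕ, (Q ^ k).totalDegree ≤ 2 * k := fun k =>
    (totalDegree_pow Q k).trans (by nlinarith [hQdeg])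
  -- degree of f₁
  have hf₁le : f₁.totalDegree ≤ 2 * m := by
    rw [hf₁]
    refine (totalDegree_add _ _).trans (max_le (by rw [totalDegree_X]; omega) ?_)
    exact (aux_totalDegree_C_mul_le _ _).trans (hQpow m)
  have hf₁coeff : coeff (Finsupp.single (0 : Fin 2) (2 * m)) f₁ = βm * Γ ^ m := by
    rw [hf₁, coeff_add, coeff_C_mul, hQ, aux_coeffQ, coeff_X']
    rw [if_neg, zero_add]
    intro h
    have h1 := DFunLike.congr_fun h (0 : Fin 2)
    simp [Finsupp.single_apply] at h1
    omega
  have hf₁deg : f₁.totalDegree = 2 * m := by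
    refine le_antisymm hf₁le ?_
    have hne : coeff (Finsupp.single (0 : Fin 2) (2 * m)) f₁ ≠ 0 := by
      rw [hf₁coeff]
      exact mul_ne_zero hβ (pow_ne_zero _ hΓ)
    have h2 := le_totalDegree (p := f₁) (mem_support_iff.mpr hne)
    rwa [Finsupp.sum_single_index rfl] at h2
  -- degree of f₂
  have hf₂le : f₂.totalDegree ≤ 2 * m := by
    rw [hf₂]
    exact (totalDegree_add _ _).trans
      (max_le (hQdeg.trans (by omega)) ((aux_totalDegree_C_mul_le _ _).trans hf₁le))
  have hmax : max f₁.totalDegree f₂.totalDegree = 2 * m := by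
    rw [hf₁deg]
    omega
  -- decomposition of f₁² + f₂²
  have key : f₁ ^ 2 + f₂ ^ 2 = C ((1 + lam ^ 2) * βm ^ 2) * Q ^ (2 * m)
      + (C (1 + lam ^ 2) * (X 0 ^ 2 + C (2 * βm) * (X 0 * Q ^ m))
        + Q ^ 2 + C (2 * lam) * (Q * f₁)) := by
    rw [hf₂, hf₁]
    simp only [map_add, map_mul, map_one, map_pow, map_ofNat]
    ring
  have hRdeg : (C (1 + lam ^ 2) * (X 0 ^ 2 + C (2 * βm) * (X 0 * Q ^ m))
      + Q ^ 2 + C (2 * lam) * (Q * f₁)).totalDegree < 4 * m := by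
    have hqm := hQpow m
    have hq2 := hQpow 2
    have hA : (X 0 * Q ^ m : MvPolynomial (Fin 2) ℝ).totalDegree ≤ 2 * m + 1 := by
      refine (totalDegree_mul _ _).trans ?_
      rw [totalDegree_X]
      omega
    have hB : (X 0 ^ 2 : MvPolynomial (Fin 2) ℝ).totalDegree ≤ 2 := by
      refine (totalDegree_pow _ _).trans ?_
      rw [totalDegree_X]
    have hC1 : (X 0 ^ 2 + C (2 * βm) * (X 0 * Q ^ m) :
        MvPolynomial (Fin 2) ℝ).totalDegree ≤ 2 * m + 1 :=
      (totalDegree_add _ _).trans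
        (max_le (hB.trans (by omega)) ((aux_totalDegree_C_mul_le _ _).trans hA))
    have hD : (Q * f₁).totalDegree ≤ 2 * m + 2 :=
      (totalDegree_mul _ _).trans (by omega)
    refine lt_of_le_of_lt ((totalDegree_add _ _).trans (max_le ((totalDegree_add _ _).trans
      (max_le ((aux_totalDegree_C_mul_le _ _).trans (hC1.trans (by omega : 2*m+1 ≤ 2*m+2))) (hq2.trans (by omega))))
      ((aux_totalDegree_C_mul_le _ _).trans hD))) (by omega)
  have hHcoeff : coeff (Finsupp.single (0 : Fin 2) (4 * m)) H
      = (1 / 2) * ((1 + lam ^ 2) * βm ^ 2 * Γ ^ (2 * m)) := by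
    rw [hH, coeff_C_mul, key, coeff_add, coeff_C_mul,
      aux_coeff_single_eq_zero _ hRdeg, add_zero]
    rw [show (4 : ℕ) * m = 2 * (2 * m) by ring, hQ, aux_coeffQ]
  have hHcoeff_ne : coeff (Finsupp.single (0 : Fin 2) (4 * m)) H ≠ 0 := by
    rw [hHcoeff]
    have h1 : (0 : ℝ) < 1 + lam ^ 2 := by positivity
    have h2 : (0 : ℝ) < βm ^ 2 := by positivity
    have h3 : Γ ^ (2 * m) ≠ 0 := pow_ne_zero _ hΓ
    intro h
    rcases mul_eq_zero.mp h with h | h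
    · norm_num at h
    · rcases mul_eq_zero.mp h with h | h
      · nlinarith
      · exact h3 h
  have hHle : H.totalDegree ≤ 4 * m := by
    rw [hH]
    have h1 : (f₁ ^ 2 : MvPolynomial (Fin 2) ℝ).totalDegree ≤ 4 * m :=
      (totalDegree_pow _ _).trans (by omega)
    have h2 : (f₂ ^ 2 : MvPolynomial (Fin 2) ℝ).totalDegree ≤ 4 * m :=
      (totalDegree_pow _ _).trans (by omega)
    exact (aux_totalDegree_C_mul_le _ _).trans ((totalDegree_add _ _).trans (max_le h1 h2))
  have hHdeg : H.totalDegree = 4 * m := by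
    refine le_antisymm hHle ?_
    have h2 := le_totalDegree (p := H) (mem_support_iff.mpr hHcoeff_ne)
    rwa [Finsupp.sum_single_index rfl] at h2
  refine ⟨hmax, hHdeg, ?_, ?_⟩
  · exact (aux_totalDegree_pderiv_le 0 H).trans (by omega)
  · exact (aux_totalDegree_pderiv_le 1 H).trans (by omega)
end

section
/- For k ≥ 2, the polynomial Hamiltonian H(x,y) = ½((x + y^k)² + (y + λ(x + y^k))²) is a proper function on ℝ² (i.e., H(x,y) → ∞ as ‖(x,y)‖ → ∞), and its only critical point is the origin. -/
/-!
`H = ½‖f‖²` for the triangular map `f(x, y) = (x + y^k, y + λ(x + y^k))`, which is a composition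
of two shears and hence a homeomorphism of `ℝ²`, smooth with smooth inverse, fixing the origin.
Properness of `½‖·‖²` therefore transfers to `H`, and by the chain rule in both directions
`DH(p) = 0` iff `D(½‖·‖²)(f p) = 0`, i.e. iff `f p = 0`, i.e. iff `p = 0`.
-/

open Filter

section Triangular

variable {R : Type*} [Ring R]

def triangularEquiv (g : R → R) (lam : R) : R × R ≃ R × R where
  toFun q := (q.1 + g q.2, q.2 + lam * (q.1 + g q.2))
  invFun q := (q.1 - g (q.2 - lam * q.1), q.2 - lam * q.1)
  left_inv q := by simp
  right_inv q := by simp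

@[simp]
lemma triangularEquiv_apply (g : R → R) (lam : R) (q : R × R) :
    triangularEquiv g lam q = (q.1 + g q.2, q.2 + lam * (q.1 + g q.2)) := rfl

@[simp]
lemma triangularEquiv_symm_apply (g : R → R) (lam : R) (q : R × R) :
    (triangularEquiv g lam).symm q = (q.1 - g (q.2 - lam * q.1), q.2 - lam * q.1) := rfl

lemma triangularEquiv_eq_zero_iff {g : R → R} (hg : g 0 = 0) (lam : R) {q : R × R} :
    triangularEquiv g lam q = 0 ↔ q = 0 := by
  rw [← Equiv.eq_symm_apply]
  simp [hg, Prod.mk_zero_zero]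

def triangularHomeomorph [TopologicalSpace R] [IsTopologicalRing R] {g : R → R}
    (hg : Continuous g) (lam : R) : R × R ≃ₜ R × R where
  toEquiv := triangularEquiv g lam
  continuous_toFun := by
    change Continuous fun q => triangularEquiv g lam q
    simp only [triangularEquiv_apply]; fun_prop
  continuous_invFun := by
    change Continuous fun q => (triangularEquiv g lam).symm q
    simp only [triangularEquiv_symm_apply]; fun_prop

variable {𝕜 : Type*} [NontriviallyNormedField 𝕜]

lemma differentiable_triangularEquiv {g : 𝕜 → 𝕜} (hg : Differentiable 𝕜 g) (lam : 𝕜) :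
    Differentiable 𝕜 (triangularEquiv g lam) := by
  change Differentiable 𝕜 fun q => triangularEquiv g lam q
  simp only [triangularEquiv_apply]; fun_prop

lemma differentiable_triangularEquiv_symm {g : 𝕜 → 𝕜} (hg : Differentiable 𝕜 g) (lam : 𝕜) :
    Differentiable 𝕜 (triangularEquiv g lam).symm := by
  change Differentiable 𝕜 fun q => (triangularEquiv g lam).symm q
  simp only [triangularEquiv_symm_apply]; fun_prop

end Triangular

lemma fderiv_comp_equiv_eq_zero_iff {𝕜 E F G : Type*} [NontriviallyNormedField 𝕜]
    [NormedAddCommGroup E] [NormedSpace 𝕜 E] [NormedAddCommGroup F] [NormedSpace 𝕜 F]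
    [NormedAddCommGroup G] [NormedSpace 𝕜 G] {e : E ≃ F} (he : Differentiable 𝕜 e)
    (he' : Differentiable 𝕜 e.symm) {g : F → G} (hg : Differentiable 𝕜 g) (x : E) :
    fderiv 𝕜 (g ∘ e) x = 0 ↔ fderiv 𝕜 g (e x) = 0 := by
  refine ⟨fun h => ?_, fun h => by
    rw [fderiv_comp x (hg _) (he x), h, ContinuousLinearMap.zero_comp]⟩
  have hge : g = (g ∘ e) ∘ e.symm := by ext; simp
  rw [hge, fderiv_comp _ ((hg.comp he) _) (he' _), e.symm_apply_apply, h,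
    ContinuousLinearMap.zero_comp]

noncomputable def halfSumSq (q : ℝ × ℝ) : ℝ := (q.1 ^ 2 + q.2 ^ 2) / 2

lemma tendsto_halfSumSq_cocompact : Tendsto halfSumSq (cocompact (ℝ × ℝ)) atTop := by
  have hnorm : Tendsto (fun q : ℝ × ℝ => ‖q‖ ^ 2 / 2) (cocompact (ℝ × ℝ)) atTop :=
    ((tendsto_pow_atTop two_ne_zero).comp tendsto_norm_cocompact_atTop).atTop_div_const two_pos
  refine tendsto_atTop_mono (fun q => ?_) hnorm
  have : ‖q‖ ^ 2 ≤ q.1 ^ 2 + q.2 ^ 2 := by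
    rw [Prod.norm_def, Real.norm_eq_abs, Real.norm_eq_abs]
    rcases max_choice |q.1| |q.2| with h | h <;> rw [h, sq_abs] <;>
      nlinarith [sq_nonneg q.1, sq_nonneg q.2]
  unfold halfSumSq; linarith

lemma hasFDerivAt_halfSumSq (q : ℝ × ℝ) :
    HasFDerivAt halfSumSq
      (q.1 • ContinuousLinearMap.fst ℝ ℝ ℝ + q.2 • ContinuousLinearMap.snd ℝ ℝ ℝ) q := by
  have hfst : HasFDerivAt (Prod.fst : ℝ × ℝ → ℝ) (ContinuousLinearMap.fst ℝ ℝ ℝ) q :=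
    hasFDerivAt_fst
  have hsnd : HasFDerivAt (Prod.snd : ℝ × ℝ → ℝ) (ContinuousLinearMap.snd ℝ ℝ ℝ) q :=
    hasFDerivAt_snd
  have hsum := ((hfst.pow 2).fun_add (hsnd.pow 2)).mul_const (2⁻¹ : ℝ)
  unfold halfSumSq
  simp only [div_eq_mul_inv]
  refine hsum.congr_fderiv ?_
  ext <;> simp

lemma fderiv_halfSumSq_eq_zero_iff (q : ℝ × ℝ) : fderiv ℝ halfSumSq q = 0 ↔ q = 0 := by
  rw [(hasFDerivAt_halfSumSq q).fderiv]
  refine ⟨fun h => Prod.ext ?_ ?_, fun h => by simp [h]⟩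
  · simpa using congrArg (fun L : ℝ × ℝ →L[ℝ] ℝ => L (1, 0)) h
  · simpa using congrArg (fun L : ℝ × ℝ →L[ℝ] ℝ => L (0, 1)) h

theorem stmt19 (k : ℕ) (hk : 2 ≤ k) (lam : ℝ)
    (H : ℝ × ℝ → ℝ)
    (hH : ∀ p : ℝ × ℝ, H p =
      ((p.1 + p.2 ^ k) ^ 2 + (p.2 + lam * (p.1 + p.2 ^ k)) ^ 2) / 2) :
    Filter.Tendsto H (Filter.cocompact (ℝ × ℝ)) Filter.atTop ∧
    (∀ p : ℝ × ℝ, fderiv ℝ H p = 0 ↔ p = (0, 0)) := by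
  have hHf : H = halfSumSq ∘ triangularEquiv (· ^ k) lam := funext hH
  have hpow : Differentiable ℝ fun y : ℝ => y ^ k := differentiable_pow k
  refine ⟨?_, fun p => ?_⟩
  · rw [hHf]
    exact tendsto_halfSumSq_cocompact.comp
      (triangularHomeomorph (continuous_pow k) lam).isClosedEmbedding.tendsto_cocompact
  · rw [hHf, fderiv_comp_equiv_eq_zero_iff (differentiable_triangularEquiv hpow lam)
      (differentiable_triangularEquiv_symm hpow lam)
      (fun q => (hasFDerivAt_halfSumSq q).differentiableAt),
      fderiv_halfSumSq_eq_zero_iff, triangularEquiv_eq_zero_iff (zero_pow (by omega))]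
    rfl
end
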